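/- If H is a spanning subgraph of a graph G obtained by removing k edges, then b(G) ≤ b(H) + k. -/

import Mathlib

open SimpleGraph

variable {V : Type*}

/-- `S` is a dominating set of `G`: every vertex is in `S` or has a neighbor in `S`. -/
def SimpleGraph.IsDomSet (G : SimpleGraph V) (S : Finset V) : Prop :=
  ∀ v : V, v ∈ S ∨ ∃ u ∈ S, G.Adj u v

/-- The domination number of a finite graph. -/
noncomputable def SimpleGraph.domNum [Fintype V] (G : SimpleGraph V) : ℕ :=
  sInf {n | ∃ S : Finset V, S.card = n ∧ G.IsDomSet S}

/-- The bondage number: the minimum size of a set of edges of `G` whose removal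
increases the domination number. -/
noncomputable def SimpleGraph.bondageNum [Fintype V] (G : SimpleGraph V) : ℕ :=
  sInf {n | ∃ B : Finset (Sym2 V), B.card = n ∧ ↑B ⊆ G.edgeSet ∧
    G.domNum < (G.deleteEdges ↑B).domNum}

/-! Removing a minimum bondage set `B` of `H = G − E'` from `H` is the same as removing `B ∪ E'`
from `G`, and it pushes the domination number above `γ(H) ≥ γ(G)`; hence
`b(G) ≤ |B ∪ E'| ≤ b(H) + k`. That `H` has an edge guarantees that `H` has a bondage set at all:
deleting every edge raises the domination number to `|V|`. -/

namespace SimpleGraph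

section Domination

variable {G H : SimpleGraph V} {S : Finset V}

theorem IsDomSet.mono (hHG : H ≤ G) (hS : H.IsDomSet S) : G.IsDomSet S :=
  fun v => (hS v).imp id fun ⟨u, hu, huv⟩ => ⟨u, hu, hHG huv⟩

variable [Fintype V]

theorem IsDomSet.univ (G : SimpleGraph V) : G.IsDomSet Finset.univ :=
  fun v => Or.inl (Finset.mem_univ v)

theorem exists_isDomSet_card_eq_domNum (G : SimpleGraph V) :
    ∃ S : Finset V, S.card = G.domNum ∧ G.IsDomSet S :=
  Nat.sInf_mem (s := {n | ∃ S : Finset V, S.card = n ∧ G.IsDomSet S})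
    ⟨_, Finset.univ, rfl, IsDomSet.univ G⟩

theorem domNum_le_card (hS : G.IsDomSet S) : G.domNum ≤ S.card :=
  Nat.sInf_le ⟨S, rfl, hS⟩

theorem domNum_anti (hHG : H ≤ G) : G.domNum ≤ H.domNum := by
  obtain ⟨S, hScard, hS⟩ := H.exists_isDomSet_card_eq_domNum
  exact hScard ▸ domNum_le_card (hS.mono hHG)

theorem domNum_bot : (⊥ : SimpleGraph V).domNum = Fintype.card V := by
  obtain ⟨S, hScard, hS⟩ := (⊥ : SimpleGraph V).exists_isDomSet_card_eq_domNum
  have hSuniv : S = Finset.univ :=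
    Finset.eq_univ_of_forall fun v => (hS v).resolve_right fun ⟨_, _, huv⟩ => huv
  rw [← hScard, hSuniv, Finset.card_univ]

theorem domNum_lt_card_of_edgeSet_nonempty (hG : G.edgeSet.Nonempty) :
    G.domNum < Fintype.card V := by
  classical
  obtain ⟨e, he⟩ := hG
  induction e using Sym2.ind with
  | h u v =>
    have huv : G.Adj u v := he
    have hdom : G.IsDomSet (Finset.univ.erase v) := fun w => by
      by_cases hw : w = v
      · exact Or.inr ⟨u, Finset.mem_erase.2 ⟨huv.ne, Finset.mem_univ u⟩, hw ▸ huv⟩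
      · exact Or.inl (Finset.mem_erase.2 ⟨hw, Finset.mem_univ w⟩)
    calc G.domNum ≤ (Finset.univ.erase v).card := domNum_le_card hdom
      _ < Fintype.card V := Finset.card_erase_lt_of_mem (Finset.mem_univ v)

end Domination

section Bondage

variable [Fintype V] {G : SimpleGraph V}

theorem bondageNum_le_card {B : Finset (Sym2 V)} (hB : ↑B ⊆ G.edgeSet)
    (hlt : G.domNum < (G.deleteEdges ↑B).domNum) : G.bondageNum ≤ B.card :=
  Nat.sInf_le ⟨B, rfl, hB, hlt⟩

theorem exists_bondage_set_card_eq_bondageNum (hG : G.edgeSet.Nonempty) :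
    ∃ B : Finset (Sym2 V), B.card = G.bondageNum ∧ ↑B ⊆ G.edgeSet ∧
      G.domNum < (G.deleteEdges ↑B).domNum := by
  classical
  refine Nat.sInf_mem (s := {n | ∃ B : Finset (Sym2 V), B.card = n ∧ ↑B ⊆ G.edgeSet ∧
    G.domNum < (G.deleteEdges ↑B).domNum}) ⟨_, G.edgeFinset, rfl, by rw [coe_edgeFinset], ?_⟩
  rw [coe_edgeFinset, deleteEdges_edgeSet, sdiff_self, domNum_bot]
  exact domNum_lt_card_of_edgeSet_nonempty hG

end Bondage

end SimpleGraph

theorem bondage_le_bondage_spanning_add [Fintype V] (G : SimpleGraph V)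
    (E' : Finset (Sym2 V)) (hE' : ↑E' ⊆ G.edgeSet) (k : ℕ) (hk : E'.card = k)
    (hH : (G.deleteEdges ↑E').edgeSet.Nonempty) :
    G.bondageNum ≤ (G.deleteEdges ↑E').bondageNum + k := by
  classical
  obtain ⟨B, hBcard, hBsub, hBlt⟩ := exists_bondage_set_card_eq_bondageNum hH
  have hdelete : G.deleteEdges ↑(B ∪ E') = (G.deleteEdges ↑E').deleteEdges ↑B := by
    rw [deleteEdges_deleteEdges, Finset.coe_union, Set.union_comm]
  have hsub : ↑(B ∪ E') ⊆ G.edgeSet := by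
    rw [Finset.coe_union]
    exact Set.union_subset (hBsub.trans (edgeSet_mono (deleteEdges_le _))) hE'
  have hlt : G.domNum < (G.deleteEdges ↑(B ∪ E')).domNum :=
    hdelete ▸ (domNum_anti (deleteEdges_le _)).trans_lt hBlt
  calc G.bondageNum ≤ (B ∪ E').card := bondageNum_le_card hsub hlt
    _ ≤ B.card + E'.card := Finset.card_union_le B E'
    _ = (G.deleteEdges ↑E').bondageNum + k := by rw [hBcard, hk]
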